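/- Let $\Phi$ be differentiable and convex on an open convex $\mathcal{D}\subseteq\mathbb{R}^n$, $\mathcal{X}\subseteq\mathcal{D}$ convex, $\eta>0$, $b_t\in\mathbb{R}^n$, and $x_t\in\mathcal{X}$. Suppose $y_{t+1}\in\mathcal{D}$ satisfies $\nabla\Phi(y_{t+1}) = \nabla\Phi(x_t) - \eta b_t$, and let $x_{t+1} = \Pi^\Phi_{\mathcal{X}}(y_{t+1})$ be the Bregman projection of $y_{t+1}$ onto $\mathcal{X}$. Then for every $x\in\mathcal{X}$: $\langle b_t, x_t - x\rangle \leq \tfrac{1}{\eta}\left(D_\Phi(x,x_t) - D_\Phi(x,x_{t+1}) + D_\Phi(x_t, y_{t+1})\right)$. -/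

import Mathlib

/-!
Since `∇Φ(x_t) - ∇Φ(y_{t+1}) = η b_t`, the three-point identity turns `η ⟨b_t, x_t - x⟩` into
`D(x, x_t) - D(x, y_{t+1}) + D(x_t, y_{t+1})`. First-order optimality of the Bregman projection,
combined with the same identity, gives `D(x, x_{t+1}) + D(x_{t+1}, y_{t+1}) ≤ D(x, y_{t+1})`, and
`D(x_{t+1}, y_{t+1}) ≥ 0` by convexity of `Φ`.
-/

open Finset

noncomputable def bregman {n : ℕ} (Φ : EuclideanSpace ℝ (Fin n) → ℝ)
    (G : EuclideanSpace ℝ (Fin n) → EuclideanSpace ℝ (Fin n))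
    (y y' : EuclideanSpace ℝ (Fin n)) : ℝ :=
  Φ y - Φ y' - ∑ i, G y' i * (y i - y' i)

open InnerProductSpace

theorem ConvexOn.le_sub_of_hasFDerivAt {E : Type*} [NormedAddCommGroup E] [NormedSpace ℝ E]
    {s : Set E} {f : E → ℝ} {f' : E →L[ℝ] ℝ} {u v : E} (hf : ConvexOn ℝ s f) (hu : u ∈ s)
    (hv : v ∈ s) (hf' : HasFDerivAt f f' u) : f' (v - u) ≤ f v - f u := by
  set ℓ : ℝ →ᵃ[ℝ] E := AffineMap.lineMap u v
  have hline : ConvexOn ℝ (ℓ ⁻¹' s) (f ∘ ℓ) := hf.comp_affineMap ℓ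
  have hderiv : HasDerivAt (f ∘ ℓ) (f' (v - u)) 0 :=
    hf'.comp_hasDerivAt_of_eq 0 AffineMap.hasDerivAt_lineMap (AffineMap.lineMap_apply_zero u v).symm
  simpa [ℓ, slope_def_field] using
    hline.le_slope_of_hasDerivAt (by simpa [ℓ] using hu) (by simpa [ℓ] using hv) one_pos hderiv

section Bregman

variable {n : ℕ} {Φ : EuclideanSpace ℝ (Fin n) → ℝ}
  {G : EuclideanSpace ℝ (Fin n) → EuclideanSpace ℝ (Fin n)}

theorem EuclideanSpace.sum_mul_eq_inner (u v : EuclideanSpace ℝ (Fin n)) :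
    ∑ i, u i * v i = ⟪u, v⟫_ℝ := by
  simp [PiLp.inner_apply, mul_comm]

theorem bregman_eq_inner (y y' : EuclideanSpace ℝ (Fin n)) :
    bregman Φ G y y' = Φ y - Φ y' - ⟪G y', y - y'⟫_ℝ := by
  rw [bregman, ← EuclideanSpace.sum_mul_eq_inner]
  rfl

theorem bregman_three_point (x x' y : EuclideanSpace ℝ (Fin n)) :
    ⟪G x' - G y, x' - x⟫_ℝ = bregman Φ G x x' - bregman Φ G x y + bregman Φ G x' y := by
  simp only [bregman_eq_inner, inner_sub_left, inner_sub_right]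
  ring

theorem bregman_nonneg {D : Set (EuclideanSpace ℝ (Fin n))} (hΦ : ConvexOn ℝ D Φ)
    {y y' : EuclideanSpace ℝ (Fin n)} (hy : y ∈ D) (hy' : y' ∈ D)
    (hG : HasGradientAt Φ (G y') y') : 0 ≤ bregman Φ G y y' := by
  have := hΦ.le_sub_of_hasFDerivAt hy' hy hG
  rw [bregman_eq_inner]
  simp only [toDual_apply_apply] at this
  linarith

theorem hasGradientAt_bregman_left {v : EuclideanSpace ℝ (Fin n)} (hG : HasGradientAt Φ (G v) v)
    (y : EuclideanSpace ℝ (Fin n)) :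
    HasGradientAt (fun w ↦ bregman Φ G w y) (G v - G y) v := by
  simp only [hasGradientAt_iff_hasFDerivAt, bregman_eq_inner]
  have hlin := (toDual ℝ _ (G y)).hasFDerivAt.comp v ((hasFDerivAt_id v).sub_const y)
  rw [map_sub]
  exact ((hG.hasFDerivAt.sub_const (Φ y)).sub hlin).congr_fderiv (by ext; simp)

theorem bregman_add_bregman_le_of_isMinOn {X : Set (EuclideanSpace ℝ (Fin n))}
    (hX : Convex ℝ X) {x p y : EuclideanSpace ℝ (Fin n)} (hx : x ∈ X) (hp : p ∈ X)
    (hmin : IsMinOn (fun w ↦ bregman Φ G w y) X p) (hG : HasGradientAt Φ (G p) p) :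
    bregman Φ G x p + bregman Φ G p y ≤ bregman Φ G x y := by
  have hopt : 0 ≤ ⟪G p - G y, x - p⟫_ℝ := by
    simpa [inner_sub_left] using hmin.localize.hasFDerivWithinAt_nonneg
      (hasGradientAt_bregman_left hG y).hasFDerivAt.hasFDerivWithinAt
      (sub_mem_posTangentConeAt_of_segment_subset (hX.segment_subset hp hx))
  have := bregman_three_point (Φ := Φ) (G := G) x p y
  rw [← neg_sub x p, inner_neg_right] at this
  linarith

end Bregman

theorem omd_one_step_general {n : ℕ} (D : Set (EuclideanSpace ℝ (Fin n)))
    (Φ : EuclideanSpace ℝ (Fin n) → ℝ)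
    (G : EuclideanSpace ℝ (Fin n) → EuclideanSpace ℝ (Fin n))
    (hG : ∀ w ∈ D, HasGradientAt Φ (G w) w)
    (hΦconv : ConvexOn ℝ D Φ)
    (X : Set (EuclideanSpace ℝ (Fin n))) (hXD : X ⊆ D) (hXconv : Convex ℝ X)
    (η : ℝ) (hη : 0 < η) (b : EuclideanSpace ℝ (Fin n))
    (xt : EuclideanSpace ℝ (Fin n))
    (yt1 : EuclideanSpace ℝ (Fin n)) (hyt1 : yt1 ∈ D)
    (hupd : ∀ i, G yt1 i = G xt i - η * b i)
    (xt1 : EuclideanSpace ℝ (Fin n)) (hxt1 : xt1 ∈ X)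
    (hproj : ∀ x' ∈ X, bregman Φ G xt1 yt1 ≤ bregman Φ G x' yt1) :
    ∀ x ∈ X, ∑ i, b i * (xt i - x i)
      ≤ (1 / η) * (bregman Φ G x xt - bregman Φ G x xt1 + bregman Φ G xt yt1) := by
  intro x hx
  have hgap : G xt - G yt1 = η • b := by
    ext i
    simp [hupd i]
  have hthree : η * ∑ i, b i * (xt i - x i)
      = bregman Φ G x xt - bregman Φ G x yt1 + bregman Φ G xt yt1 := by
    rw [← bregman_three_point, hgap, real_inner_smul_left, ← EuclideanSpace.sum_mul_eq_inner]
    simp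
  have hpyth := bregman_add_bregman_le_of_isMinOn hXconv hx hxt1 (isMinOn_iff.mpr hproj)
    (hG xt1 (hXD hxt1))
  have hnn := bregman_nonneg hΦconv (hXD hxt1) hyt1 (hG yt1 hyt1)
  rw [one_div_mul_eq_div, le_div_iff₀ hη]
  linarith

/-- One-step online mirror descent inequality: with `∇Φ(y_{t+1}) = ∇Φ(x_t) - η b_t` and
`x_{t+1}` the Bregman projection of `y_{t+1}` onto `X`, for all `x ∈ X`,
`⟨b_t, x_t - x⟩ ≤ (1/η)(D_Φ(x, x_t) - D_Φ(x, x_{t+1}) + D_Φ(x_t, y_{t+1}))`. -/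
theorem omd_one_step {n : ℕ} (D : Set (EuclideanSpace ℝ (Fin n)))
    (hDopen : IsOpen D) (hDconv : Convex ℝ D)
    (Φ : EuclideanSpace ℝ (Fin n) → ℝ)
    (G : EuclideanSpace ℝ (Fin n) → EuclideanSpace ℝ (Fin n))
    (hG : ∀ w ∈ D, HasGradientAt Φ (G w) w)
    (hΦconv : ConvexOn ℝ D Φ)
    (X : Set (EuclideanSpace ℝ (Fin n))) (hXD : X ⊆ D) (hXconv : Convex ℝ X)
    (η : ℝ) (hη : 0 < η) (b : EuclideanSpace ℝ (Fin n))
    (xt : EuclideanSpace ℝ (Fin n)) (hxt : xt ∈ X)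
    (yt1 : EuclideanSpace ℝ (Fin n)) (hyt1 : yt1 ∈ D)
    (hupd : ∀ i, G yt1 i = G xt i - η * b i)
    (xt1 : EuclideanSpace ℝ (Fin n)) (hxt1 : xt1 ∈ X)
    (hproj : ∀ x' ∈ X, bregman Φ G xt1 yt1 ≤ bregman Φ G x' yt1) :
    ∀ x ∈ X, ∑ i, b i * (xt i - x i)
      ≤ (1 / η) * (bregman Φ G x xt - bregman Φ G x xt1 + bregman Φ G xt yt1) :=
  omd_one_step_general D Φ G hG hΦconv X hXD hXconv η hη b xt yt1 hyt1 hupd xt1 hxt1 hproj
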